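/- arXiv:1309.4280 — 5 statements merged into one kernel-verified Lean document; each statement's English description precedes it below -/
import Mathlib

section
/- Let L be a normed Riesz space and P = x ⊗ φ a positive rank-one idempotent on L, where x is a positive vector and φ a positive continuous functional with φ(x) = 1. Then P has no nontrivial closed invariant order ideal if and only if x is a quasi-interior point of L and φ is strictly positive. -/
open Filter Topology

section Defs
variable {L : Type*} [NormedAddCommGroup L] [Lattice L] [HasSolidNorm L] [IsOrderedAddMonoid L] [NormedSpace ℝ L]

def IsOrderIdeal (J : Submodule ℝ L) : Prop :=
  ∀ x y : L, |x| ≤ |y| → y ∈ J → x ∈ J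

def InvariantUnder (T : L →L[ℝ] L) (J : Submodule ℝ L) : Prop :=
  ∀ x ∈ J, T x ∈ J

def PositiveOp (T : L →L[ℝ] L) : Prop := ∀ x : L, 0 ≤ x → 0 ≤ T x

def IdealReducible (F : Set (L →L[ℝ] L)) : Prop :=
  ∃ J : Submodule ℝ L, IsOrderIdeal J ∧ IsClosed (J : Set L) ∧ J ≠ ⊥ ∧ J ≠ ⊤ ∧
    ∀ T ∈ F, InvariantUnder T J

def ClosedIdealChain (C : Set (Submodule ℝ L)) : Prop :=
  IsChain (· ≤ ·) C ∧ ∀ J ∈ C, IsOrderIdeal J ∧ IsClosed (J : Set L)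

def IdealTriangularizable (F : Set (L →L[ℝ] L)) : Prop :=
  ∃ C : Set (Submodule ℝ L), ClosedIdealChain C ∧
    (∀ C' : Set (Submodule ℝ L), ClosedIdealChain C' → C ⊆ C' → C' = C) ∧
    ∀ J ∈ C, ∀ T ∈ F, InvariantUnder T J

def QuasiInterior (x : L) : Prop :=
  0 ≤ x ∧ Dense {y : L | ∃ lam : ℝ, 0 ≤ lam ∧ |y| ≤ lam • x}

def StrictlyPosFunctional (φ : L →L[ℝ] ℝ) : Prop :=
  (∀ x : L, 0 ≤ x → 0 ≤ φ x) ∧ ∀ x : L, 0 ≤ x → x ≠ 0 → 0 < φ x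

def StrictlyPosOp (T : L →L[ℝ] L) : Prop :=
  PositiveOp T ∧ ∀ x : L, T |x| = 0 → x = 0

def AdjointStrictlyPos (T : L →L[ℝ] L) : Prop :=
  ∀ ψ : L →L[ℝ] ℝ, (∀ x : L, 0 ≤ x → 0 ≤ ψ x) → ψ.comp T = 0 → ψ = 0

def IsLatAtom (a : L) : Prop :=
  0 ≤ a ∧ a ≠ 0 ∧ ∀ x : L, 0 ≤ x → x ≤ a → ∃ lam : ℝ, 0 ≤ lam ∧ x = lam • a

def Quasinilpotent (T : L →L[ℝ] L) : Prop :=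
  Tendsto (fun n : ℕ => ‖T ^ n‖ ^ ((1:ℝ) / n)) atTop (𝓝 0)

def PowerCompact (T : L →L[ℝ] L) : Prop :=
  ∃ k : ℕ, 0 < k ∧ IsCompactOperator (T ^ k : L →L[ℝ] L)

def OpLE (S T : L →L[ℝ] L) : Prop := ∀ x : L, 0 ≤ x → S x ≤ T x

def IsBand (B : Submodule ℝ L) : Prop :=
  IsOrderIdeal B ∧ ∀ A : Set L, A.Nonempty → A ⊆ B → ∀ x : L, IsLUB A x → x ∈ B

def IsBandProjection (P : L →L[ℝ] L) (B : Submodule ℝ L) : Prop :=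
  PositiveOp P ∧ P.comp P = P ∧ (∀ x : L, P x ∈ B) ∧ (∀ x ∈ B, P x = x) ∧
    ∀ x : L, ∀ b ∈ B, |x - P x| ⊓ |b| = 0

def IsAtomicBand (B : Submodule ℝ L) : Prop :=
  IsBand B ∧ (∀ a : L, IsLatAtom a → a ∈ B) ∧
    ∀ B' : Submodule ℝ L, IsBand B' → (∀ a : L, IsLatAtom a → a ∈ B') → B ≤ B'

def DedekindComplete (L : Type*) [NormedAddCommGroup L] [Lattice L] [HasSolidNorm L] [IsOrderedAddMonoid L] : Prop :=
  ∀ A : Set L, A.Nonempty → BddAbove A → ∃ x : L, IsLUB A x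

def OrderContinuousNorm (L : Type*) [NormedAddCommGroup L] [Lattice L] [HasSolidNorm L] [IsOrderedAddMonoid L] : Prop :=
  ∀ A : Set L, A.Nonempty → DirectedOn (· ≥ ·) A → IsGLB A 0 →
    ∀ ε : ℝ, 0 < ε → ∃ a ∈ A, ‖a‖ < ε

def MaxAtomFamily (𝒜 : Set L) : Prop :=
  (∀ a ∈ 𝒜, IsLatAtom a ∧ ‖a‖ = 1) ∧
  (∀ a ∈ 𝒜, ∀ b ∈ 𝒜, a ≠ b → a ⊓ b = 0) ∧
  ∀ c : L, IsLatAtom c → ∃ a ∈ 𝒜, ¬ (c ⊓ a = 0)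

def AtomicDiagOf (𝒜 : Set L) (Pa : L → (L →L[ℝ] L)) (T D : L →L[ℝ] L) : Prop :=
  (∀ F : Finset L, ↑F ⊆ 𝒜 → OpLE (∑ a ∈ F, (Pa a).comp (T.comp (Pa a))) D) ∧
  ∀ U : L →L[ℝ] L,
    (∀ F : Finset L, ↑F ⊆ 𝒜 → OpLE (∑ a ∈ F, (Pa a).comp (T.comp (Pa a))) U) → OpLE D U

def SchepSet (T : L →L[ℝ] L) : Set (L →L[ℝ] L) :=
  {S | ∃ (m : ℕ) (P : Fin m → (L →L[ℝ] L)) (B : Fin m → Submodule ℝ L),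
    (∀ i, IsBand (B i) ∧ IsBandProjection (P i) (B i)) ∧ (∑ i, P i = 1) ∧
    S = ∑ i, (P i).comp (T.comp (P i))}

def CentralPartOf (T PT : L →L[ℝ] L) : Prop :=
  PositiveOp PT ∧ (∀ S ∈ SchepSet T, OpLE PT S) ∧
    ∀ U : L →L[ℝ] L, PositiveOp U → (∀ S ∈ SchepSet T, OpLE U S) → OpLE U PT

end Defs

/-!
If `φ` has a nonzero positive null vector `y`, the null ideal `{z | φ |z| = 0}` is a closed
ideal containing `y` but not `x`, and it is killed by `P = x ⊗ φ`; if `x` is not quasi-interior,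
the closure of the principal ideal of `x` is a proper closed ideal containing the range of `P`.
Conversely, a nonzero closed ideal `J` invariant under `P` contains some `|z| ≠ 0`, so it contains
`P |z| = φ |z| • x` with `φ |z| > 0`, hence `x`, hence the principal ideal of `x`, whose closure
is all of `L` when `x` is quasi-interior.
-/

section Scalars
variable {M : Type*} [AddCommGroup M] [Lattice M] [IsOrderedAddMonoid M] [Module ℝ M]

lemma inv_two_pow_smul_nonneg {z : M} (hz : 0 ≤ z) (j : ℕ) : 0 ≤ ((2 : ℝ) ^ j)⁻¹ • z := by
  induction j with
  | zero => simpa using hz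
  | succ j ih =>
    refine nsmul_two_semiclosed ?_
    rw [← Nat.cast_smul_eq_nsmul ℝ, smul_smul]
    convert ih using 2
    rw [pow_succ]
    push_cast
    field_simp

end Scalars

section NormedLattice
variable {L : Type*} [NormedAddCommGroup L] [Lattice L] [HasSolidNorm L] [IsOrderedAddMonoid L]

lemma continuous_abs_of_hasSolidNorm : Continuous (fun y : L => |y|) :=
  continuous_id.sup continuous_neg

variable [NormedSpace ℝ L]

/-- The hypotheses do not make `L` an ordered module; this follows because the positive cone is
closed and dyadic multiples of a positive vector are positive. -/
lemma smul_nonneg_of_hasSolidNorm {c : ℝ} (hc : 0 ≤ c) {z : L} (hz : 0 ≤ z) : 0 ≤ c • z := by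
  have hdyadic : ∀ j : ℕ, 0 ≤ ((⌊c * 2 ^ j⌋₊ : ℝ) / 2 ^ j) • z := fun j => by
    rw [div_eq_mul_inv, mul_smul, Nat.cast_smul_eq_nsmul]
    exact nsmul_nonneg (inv_two_pow_smul_nonneg hz j) _
  have hlim : Tendsto (fun j : ℕ => ((⌊c * 2 ^ j⌋₊ : ℝ) / 2 ^ j)) atTop (𝓝 c) :=
    (tendsto_nat_floor_mul_div_atTop hc).comp (tendsto_pow_atTop_atTop_of_one_lt one_lt_two)
  exact isClosed_nonneg.mem_of_tendsto (hlim.smul_const z) (Eventually.of_forall hdyadic)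

instance HasSolidNorm.posSMulMono : PosSMulMono ℝ L :=
  PosSMulMono.of_smul_nonneg fun _ hc _ hz => smul_nonneg_of_hasSolidNorm hc hz

lemma abs_smul_le_abs_smul_abs (c : ℝ) (y : L) : |c • y| ≤ |c| • |y| := by
  have key : ∀ (d : ℝ) (w : L), d • w ≤ |d| • |w| := fun d w => by
    rcases le_total 0 d with hd | hd
    · rw [abs_of_nonneg hd]
      exact smul_le_smul_of_nonneg_left (le_abs_self w) hd
    · rw [← neg_smul_neg, abs_of_nonpos hd, ← abs_neg w]
      exact smul_le_smul_of_nonneg_left (le_abs_self _) (neg_nonneg.2 hd)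
  exact abs_le'.2 ⟨key c y, by simpa [abs_neg] using key c (-y)⟩

/-- Clipping `a` to the order interval `[-|u|, |u|]` is continuous in `u`, lands in any order
ideal containing `u`, and returns `a` at `u = b` when `|a| ≤ |b|`. -/
lemma IsOrderIdeal.topologicalClosure {J : Submodule ℝ L} (hJ : IsOrderIdeal J) :
    IsOrderIdeal J.topologicalClosure := by
  intro a b hab hb
  set clip : L → L := fun u => (a ⊔ -|u|) ⊓ |u|
  have hclip : Continuous clip :=
    (continuous_const.sup continuous_abs_of_hasSolidNorm.neg).inf continuous_abs_of_hasSolidNorm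
  have habs_clip : ∀ u, |clip u| ≤ |u| := fun u =>
    abs_le'.2 ⟨inf_le_right, neg_le.1 (le_inf le_sup_right (neg_le_self (abs_nonneg u)))⟩
  have hclip_b : clip b = a := by
    simp only [clip, sup_eq_left.2 (neg_le.1 ((neg_le_abs a).trans hab)),
      inf_eq_left.2 ((le_abs_self a).trans hab)]
  rw [← hclip_b, ← SetLike.mem_coe, Submodule.topologicalClosure_coe]
  exact map_mem_closure hclip (by rwa [← Submodule.topologicalClosure_coe])
    fun u hu => hJ _ u (habs_clip u) hu

def principalIdeal (x : L) : Submodule ℝ L where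
  carrier := {y | ∃ lam : ℝ, 0 ≤ lam ∧ |y| ≤ lam • x}
  add_mem' := by
    rintro a b ⟨la, hla, ha⟩ ⟨lb, hlb, hb⟩
    exact ⟨la + lb, add_nonneg hla hlb,
      (abs_add_le a b).trans (add_smul la lb x ▸ add_le_add ha hb)⟩
  zero_mem' := ⟨0, le_rfl, by simp⟩
  smul_mem' := by
    rintro c z ⟨l, hl, hz⟩
    refine ⟨|c| * l, mul_nonneg (abs_nonneg c) hl, ?_⟩
    calc |c • z| ≤ |c| • |z| := abs_smul_le_abs_smul_abs c z
      _ ≤ |c| • (l • x) := smul_le_smul_of_nonneg_left hz (abs_nonneg c)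
      _ = (|c| * l) • x := (mul_smul _ _ _).symm

lemma isOrderIdeal_principalIdeal (x : L) : IsOrderIdeal (principalIdeal x) := by
  rintro a b hab ⟨l, hl, hb⟩
  exact ⟨l, hl, hab.trans hb⟩

lemma self_mem_principalIdeal {x : L} (hx : 0 ≤ x) : x ∈ principalIdeal x :=
  ⟨1, zero_le_one, by rw [one_smul, abs_of_nonneg hx]⟩

lemma principalIdeal_le {x : L} (hx : 0 ≤ x) {J : Submodule ℝ L} (hJ : IsOrderIdeal J)
    (hxJ : x ∈ J) : principalIdeal x ≤ J := by
  rintro y ⟨l, hl, hy⟩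
  refine hJ y (l • x) ?_ (J.smul_mem l hxJ)
  rwa [abs_of_nonneg (smul_nonneg hl hx)]

lemma smulRight_apply_mem_principalIdeal {x : L} (hx : 0 ≤ x) (φ : L →L[ℝ] ℝ) (z : L) :
    φ.smulRight x z ∈ principalIdeal x :=
  (principalIdeal x).smul_mem _ (self_mem_principalIdeal hx)

lemma quasiInterior_iff {x : L} (hx : 0 ≤ x) :
    QuasiInterior x ↔ (principalIdeal x).topologicalClosure = ⊤ := by
  rw [QuasiInterior, and_iff_right hx, ← SetLike.coe_set_eq, Submodule.topologicalClosure_coe,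
    Submodule.top_coe, dense_iff_closure_eq]
  rfl

lemma QuasiInterior.eq_top_of_mem {x : L} (hx : QuasiInterior x) {J : Submodule ℝ L}
    (hJ : IsOrderIdeal J) (hJc : IsClosed (J : Set L)) (hxJ : x ∈ J) : J = ⊤ := by
  refine top_le_iff.1 ?_
  rw [← (quasiInterior_iff hx.1).1 hx]
  exact Submodule.topologicalClosure_minimal _ (principalIdeal_le hx.1 hJ hxJ) hJc

section NullIdeal
variable (φ : L →L[ℝ] ℝ) (hφ : ∀ y : L, 0 ≤ y → 0 ≤ φ y)
include hφ

def nullIdeal : Submodule ℝ L where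
  carrier := {z | φ |z| = 0}
  add_mem' := by
    intro a b (ha : φ |a| = 0) (hb : φ |b| = 0)
    have hle : φ |a + b| ≤ φ (|a| + |b|) := by
      simpa using hφ _ (sub_nonneg.2 (abs_add_le a b))
    rw [map_add, ha, hb] at hle
    exact le_antisymm (by simpa using hle) (hφ _ (abs_nonneg _))
  zero_mem' := by simp
  smul_mem' := by
    intro c z (hz : φ |z| = 0)
    have hle : φ |c • z| ≤ φ (|c| • |z|) := by
      simpa using hφ _ (sub_nonneg.2 (abs_smul_le_abs_smul_abs c z))
    rw [map_smul, hz, smul_zero] at hle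
    exact le_antisymm hle (hφ _ (abs_nonneg _))

lemma mem_nullIdeal {z : L} : z ∈ nullIdeal φ hφ ↔ φ |z| = 0 := Iff.rfl

lemma isOrderIdeal_nullIdeal : IsOrderIdeal (nullIdeal φ hφ) := fun a b hab (hb : φ |b| = 0) =>
  le_antisymm (by simpa [hb] using hφ _ (sub_nonneg.2 hab)) (hφ _ (abs_nonneg a))

lemma isClosed_nullIdeal : IsClosed (nullIdeal φ hφ : Set L) :=
  isClosed_singleton.preimage (φ.continuous.comp continuous_abs_of_hasSolidNorm)

lemma apply_eq_zero_of_mem_nullIdeal {z : L} (hz : z ∈ nullIdeal φ hφ) : φ z = 0 := by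
  have h₁ : φ z ≤ φ |z| := by simpa using hφ _ (sub_nonneg.2 (le_abs_self z))
  have h₂ : 0 ≤ φ |z| + φ z := by simpa using hφ _ (sub_nonneg.2 (neg_le_abs z))
  rw [(mem_nullIdeal φ hφ).1 hz] at h₁ h₂
  linarith

end NullIdeal

section RankOne
variable {x : L} {φ : L →L[ℝ] ℝ}

lemma strictlyPosFunctional_of_not_idealReducible_smulRight (hφ : ∀ y : L, 0 ≤ y → 0 ≤ φ y)
    (hx : 0 ≤ x) (hφx : φ x = 1) (h : ¬ IdealReducible ({φ.smulRight x} : Set (L →L[ℝ] L))) :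
    StrictlyPosFunctional φ := by
  refine ⟨hφ, fun y hy hy0 => (hφ y hy).lt_of_ne' fun hφy => h ?_⟩
  refine ⟨nullIdeal φ hφ, isOrderIdeal_nullIdeal φ hφ, isClosed_nullIdeal φ hφ, ?_, ?_, ?_⟩
  · exact (Submodule.ne_bot_iff _).2 ⟨y, by rwa [mem_nullIdeal, abs_of_nonneg hy], hy0⟩
  · intro htop
    have hxN : x ∈ nullIdeal φ hφ := htop ▸ Submodule.mem_top
    rw [mem_nullIdeal, abs_of_nonneg hx, hφx] at hxN
    exact one_ne_zero hxN
  · rintro T rfl z hz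
    rw [ContinuousLinearMap.smulRight_apply, apply_eq_zero_of_mem_nullIdeal φ hφ hz, zero_smul]
    exact zero_mem _

lemma quasiInterior_of_not_idealReducible_smulRight (hx : 0 ≤ x) (hφx : φ x = 1)
    (h : ¬ IdealReducible ({φ.smulRight x} : Set (L →L[ℝ] L))) : QuasiInterior x := by
  have hx0 : x ≠ 0 := by
    rintro rfl
    simp at hφx
  refine (quasiInterior_iff hx).2 (by_contra fun hne => h ⟨_,
    (isOrderIdeal_principalIdeal x).topologicalClosure, Submodule.isClosed_topologicalClosure _,
    ?_, hne, ?_⟩)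
  · exact (Submodule.ne_bot_iff _).2
      ⟨x, Submodule.le_topologicalClosure _ (self_mem_principalIdeal hx), hx0⟩
  · rintro T rfl z -
    exact Submodule.le_topologicalClosure _ (smulRight_apply_mem_principalIdeal hx φ z)

lemma QuasiInterior.not_idealReducible_smulRight (hx : QuasiInterior x)
    (hφ : StrictlyPosFunctional φ) : ¬ IdealReducible ({φ.smulRight x} : Set (L →L[ℝ] L)) := by
  rintro ⟨J, hJ, hJc, hJbot, hJtop, hJinv⟩
  obtain ⟨z, hzJ, hz0⟩ := Submodule.exists_mem_ne_zero_of_ne_bot hJbot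
  have habs : |z| ∈ J := hJ _ z (abs_abs z).le hzJ
  have habs0 : |z| ≠ 0 := fun h => hz0 (norm_eq_zero.1 (by rw [← norm_abs_eq_norm, h, norm_zero]))
  have hpos : 0 < φ |z| := hφ.2 _ (abs_nonneg z) habs0
  have hxJ : x ∈ J := by
    have h := J.smul_mem (φ |z|)⁻¹ (hJinv _ rfl _ habs)
    rwa [ContinuousLinearMap.smulRight_apply, smul_smul, inv_mul_cancel₀ hpos.ne', one_smul] at h
  exact hJtop (hx.eq_top_of_mem hJ hJc hxJ)

end RankOne

end NormedLattice

theorem stmt2 {L : Type*} [NormedAddCommGroup L] [Lattice L] [HasSolidNorm L] [IsOrderedAddMonoid L] [NormedSpace ℝ L]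
    (x : L) (φ : L →L[ℝ] ℝ) (hx : 0 ≤ x) (hφ : ∀ y : L, 0 ≤ y → 0 ≤ φ y)
    (hφx : φ x = 1) :
    (¬ IdealReducible ({φ.smulRight x} : Set (L →L[ℝ] L))) ↔
      QuasiInterior x ∧ StrictlyPosFunctional φ := by
  refine ⟨fun h => ⟨quasiInterior_of_not_idealReducible_smulRight hx hφx h,
    strictlyPosFunctional_of_not_idealReducible_smulRight hφ hx hφx h⟩, ?_⟩
  rintro ⟨hquasi, hstrict⟩
  exact hquasi.not_idealReducible_smulRight hstrict
end

section
/- Let L be a Dedekind complete Banach lattice, A the band generated by all atoms of L, and P_A the band projection onto A. For every positive operator T on L, the atomic diagonal D(T) = sup over finite sets F of pairwise disjoint norm-one atoms of Σ_{a∈F} P_a T P_a equals P_A ∘ 𝒫(T), where 𝒫 is the band projection of the regular operators onto the center Z(L). -/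
open Filter Topology

/-!
`D ≤ P_A 𝒫(T)`: a finite diagonal sum `∑ P_a T P_a` is positive and lies below every Schep sum
`∑ Q_i T Q_i`, because each atom lies in the band of one `Q_i` and is killed by the others, and the
compressions `P_a R P_a` of a positive `R` over disjoint atoms add up to at most `R`. Hence it lies
below `𝒫(T)`; its values lie in `A`, where `P_A` is the identity.

`P_A 𝒫(T) ≤ D`: comparing `𝒫(T)` with the two-piece Schep sum `P_a T P_a + (1 - P_a) T (1 - P_a)`
shows that the positive part of `P_A 𝒫(T) x - D x` is disjoint from every atom of the maximal
family. It also lies in `A`, which is contained in the double disjoint complement of the atoms, so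
it vanishes.
-/

lemma inf_eq_zero_of_le {M : Type*} [Lattice M] [Zero M] {u v w : M} (hu : 0 ≤ u) (huv : u ≤ v)
    (hvw : v ⊓ w = 0) : u ⊓ w = 0 :=
  le_antisymm (hvw ▸ inf_le_inf_right w huv) (le_inf hu (hvw ▸ inf_le_right))

section LatticeOrderedGroup
variable {M : Type*} [AddCommGroup M] [Lattice M] [IsOrderedAddMonoid M]

lemma eq_zero_of_abs_nonpos {x : M} (h : |x| ≤ 0) : x = 0 :=
  le_antisymm ((le_abs_self x).trans h) (neg_nonpos.mp ((neg_le_abs x).trans h))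

lemma add_inf_eq_zero {u v w : M} (huw : u ⊓ w = 0) (hvw : v ⊓ w = 0) : (u + v) ⊓ w = 0 := by
  set z := (u + v) ⊓ w
  have hw : 0 ≤ w := huw ▸ inf_le_right
  have hv : 0 ≤ v := hvw ▸ inf_le_left
  have hz : z = (z - u) ⊔ (z - w) := by rw [← sub_inf, huw, sub_zero]
  have hzv : z ≤ v := hz ▸ sup_le (sub_le_iff_le_add'.mpr inf_le_left)
    ((sub_nonpos.mpr inf_le_right).trans hv)
  exact le_antisymm (hvw ▸ le_inf hzv inf_le_right)
    (le_inf (add_nonneg (huw ▸ inf_le_left) hv) hw)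

lemma Finset.sum_inf_eq_zero {ι : Type*} {s : Finset ι} {u : ι → M} {w : M} (hw : 0 ≤ w)
    (h : ∀ i ∈ s, u i ⊓ w = 0) : (∑ i ∈ s, u i) ⊓ w = 0 := by
  induction s using Finset.cons_induction with
  | empty => simpa using hw
  | cons i s hi ih =>
    rw [Finset.sum_cons]
    exact add_inf_eq_zero (h i (Finset.mem_cons_self i s))
      (ih fun j hj => h j (Finset.mem_cons_of_mem hj))

lemma Finset.sum_le_of_pairwise_inf_eq_zero {ι : Type*} {s : Finset ι} {u : ι → M} {x : M}
    (hx : 0 ≤ x) (hu : ∀ i ∈ s, 0 ≤ u i)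
    (hdisj : (s : Set ι).Pairwise fun i j => u i ⊓ u j = 0) (hle : ∀ i ∈ s, u i ≤ x) :
    ∑ i ∈ s, u i ≤ x := by
  induction s using Finset.cons_induction with
  | empty => simpa using hx
  | cons i s hi ih =>
    have hmem : ∀ j ∈ s, j ∈ Finset.cons i s hi := fun j hj => Finset.mem_cons_of_mem hj
    have hi' : i ∈ Finset.cons i s hi := Finset.mem_cons_self i s
    have hsum : (∑ j ∈ s, u j) ⊓ u i = 0 :=
      Finset.sum_inf_eq_zero (hu i hi') fun j hj =>
        hdisj (hmem j hj) hi' fun hji => hi (hji ▸ hj)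
    rw [Finset.sum_cons, ← inf_add_sup, inf_comm, hsum, zero_add]
    exact sup_le (hle i hi') (ih (fun j hj => hu j (hmem j hj))
      (hdisj.mono fun j hj => hmem j hj) fun j hj => hle j (hmem j hj))

lemma IsLUB.posPart_inf_eq_zero {U : Set M} {z w : M} (hz : IsLUB U z) (hw : 0 ≤ w)
    (h : ∀ u ∈ U, u⁺ ⊓ w = 0) : z⁺ ⊓ w = 0 := by
  set r := z⁺ ⊓ w
  have hr : 0 ≤ r := le_inf (posPart_nonneg z) hw
  have hbound : z ≤ z⁺ - r := hz.2 fun u hu => by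
    have hur : u⁺ ⊓ r = 0 := by
      rw [inf_comm]
      exact inf_eq_zero_of_le hr inf_le_right (by rw [inf_comm]; exact h u hu)
    have hsum : u⁺ + r ≤ z⁺ := by
      rw [← inf_add_sup, hur, zero_add]
      exact sup_le (posPart_mono (hz.1 hu)) inf_le_left
    exact (le_posPart u).trans (le_sub_iff_add_le.mpr hsum)
  have : z⁺ ≤ z⁺ - r := sup_le hbound (sub_nonneg.mpr inf_le_left)
  exact le_antisymm (by simpa using this) hr

lemma inv_two_pow_smul_nonneg_s5 [Module ℝ M] {x : M} (hx : 0 ≤ x) (n : ℕ) :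
    0 ≤ ((2 : ℝ) ^ n)⁻¹ • x := by
  induction n with
  | zero => simpa using hx
  | succ n ih =>
    refine nsmul_two_semiclosed ?_
    have h : ((2 : ℕ) : ℝ) * ((2 : ℝ) ^ (n + 1))⁻¹ = ((2 : ℝ) ^ n)⁻¹ := by
      rw [pow_succ]; field_simp; norm_num
    rwa [← Nat.cast_smul_eq_nsmul ℝ, smul_smul, h]

end LatticeOrderedGroup

section LatticeOrderedModule
variable {M : Type*} [AddCommGroup M] [Lattice M] [Module ℝ M] [PosSMulMono ℝ M]

lemma smul_inf_of_nonneg {c : ℝ} (hc : 0 ≤ c) (x y : M) : c • (x ⊓ y) = c • x ⊓ c • y := by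
  rcases hc.eq_or_lt with rfl | hc
  · simp
  · exact (OrderIso.smulRight hc).map_inf x y

lemma smul_sup_of_nonneg {c : ℝ} (hc : 0 ≤ c) (x y : M) : c • (x ⊔ y) = c • x ⊔ c • y := by
  rcases hc.eq_or_lt with rfl | hc
  · simp
  · exact (OrderIso.smulRight hc).map_sup x y

lemma abs_smul_eq_abs_smul_abs (c : ℝ) (x : M) : |c • x| = |c| • |x| := by
  rcases le_total 0 c with hc | hc
  · rw [abs_of_nonneg hc, abs, abs, smul_sup_of_nonneg hc, smul_neg]
  · rw [abs_of_nonpos hc, abs, abs, smul_sup_of_nonneg (neg_nonneg.mpr hc), neg_smul, neg_smul,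
      smul_neg, neg_neg, sup_comm]

variable [IsOrderedAddMonoid M]

lemma smul_inf_eq_zero {u w : M} (h : u ⊓ w = 0) {c : ℝ} (hc : 0 ≤ c) : (c • u) ⊓ w = 0 := by
  have hu : 0 ≤ u := h ▸ inf_le_left
  have hw : 0 ≤ w := h ▸ inf_le_right
  set d := max c 1
  have hd : 0 ≤ d := le_max_of_le_right zero_le_one
  refine le_antisymm ?_ (le_inf (smul_nonneg hc hu) hw)
  calc (c • u) ⊓ w ≤ (d • u) ⊓ (d • w) :=
        inf_le_inf (smul_le_smul_of_nonneg_right (le_max_left c 1) hu)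
          (le_smul_of_one_le_left hw (le_max_right c 1))
    _ = 0 := by rw [← smul_inf_of_nonneg hd, h, smul_zero]

def disjComplement (S : Set M) : Submodule ℝ M where
  carrier := {x | ∀ s ∈ S, |x| ⊓ |s| = 0}
  zero_mem' s _ := by simp [abs_nonneg s]
  add_mem' {x y} hx hy s hs :=
    inf_eq_zero_of_le (abs_nonneg _) (abs_add_le x y) (add_inf_eq_zero (hx s hs) (hy s hs))
  smul_mem' c x hx s hs := by
    rw [abs_smul_eq_abs_smul_abs]
    exact smul_inf_eq_zero (hx s hs) (abs_nonneg c)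

lemma disjComplement_anti {S T : Set M} (h : S ⊆ T) : disjComplement T ≤ disjComplement S :=
  fun _ hx s hs => hx s (h hs)

lemma subset_disjComplement_disjComplement (S : Set M) :
    S ⊆ disjComplement (disjComplement S : Set M) :=
  fun s hs x hx => by rw [inf_comm]; exact hx s hs

lemma disjComplement_span (S : Set M) : disjComplement (Submodule.span ℝ S) = disjComplement S := by
  refine le_antisymm (disjComplement_anti Submodule.subset_span) fun x hx => ?_
  have hspan : Submodule.span ℝ S ≤ disjComplement {x} :=
    Submodule.span_le.mpr fun s hs y hy => by rw [hy, inf_comm]; exact hx s hs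
  intro s hs
  rw [inf_comm]
  exact hspan hs x rfl

lemma eq_zero_of_mem_disjComplement {S : Set M} {x : M} (hx : x ∈ S)
    (hx' : x ∈ disjComplement S) : x = 0 :=
  eq_zero_of_abs_nonpos (by simpa using (hx' x hx).le)

end LatticeOrderedModule

/-- Scalar multiplication is not assumed monotone; it is, because `0 ≤ 2 • y → 0 ≤ y` makes the
dyadic multiples of a positive vector positive and the positive cone is closed. -/
instance {L : Type*} [NormedAddCommGroup L] [Lattice L] [HasSolidNorm L] [IsOrderedAddMonoid L]
    [NormedSpace ℝ L] : PosSMulMono ℝ L := by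
  refine PosSMulMono.of_smul_nonneg fun c hc x hx => ?_
  have hdyadic : Tendsto (fun n : ℕ => ((⌊c * 2 ^ n⌋₊ : ℝ) / 2 ^ n) • x) atTop (𝓝 (c • x)) :=
    ((tendsto_nat_floor_mul_div_atTop hc).comp
      (tendsto_pow_atTop_atTop_of_one_lt one_lt_two)).smul_const x
  refine isClosed_Ici.mem_of_tendsto hdyadic (Eventually.of_forall fun n => ?_)
  rw [Set.mem_Ici, div_eq_mul_inv, ← smul_smul, Nat.cast_smul_eq_nsmul]
  exact nsmul_nonneg (inv_two_pow_smul_nonneg_s5 hx n) _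

section Operators
variable {L : Type*} [NormedAddCommGroup L] [Lattice L] [NormedSpace ℝ L]

lemma PositiveOp.comp {R S : L →L[ℝ] L} (hR : PositiveOp R) (hS : PositiveOp S) :
    PositiveOp (R.comp S) :=
  fun x hx => hR _ (hS x hx)

lemma IsBandProjection.apply_apply {P : L →L[ℝ] L} {B : Submodule ℝ L}
    (hP : IsBandProjection P B) (x : L) : P (P x) = P x :=
  DFunLike.congr_fun hP.2.1 x

variable [IsOrderedAddMonoid L]

lemma PositiveOp.mono {R : L →L[ℝ] L} (hR : PositiveOp R) {x y : L} (h : x ≤ y) : R x ≤ R y := by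
  simpa using hR (y - x) (sub_nonneg.mpr h)

lemma PositiveOp.sum {ι : Type*} {s : Finset ι} {R : ι → L →L[ℝ] L}
    (hR : ∀ i ∈ s, PositiveOp (R i)) : PositiveOp (∑ i ∈ s, R i) := fun x hx => by
  rw [sum_apply]
  exact Finset.sum_nonneg fun i hi => hR i hi x hx

lemma PositiveOp.abs_apply_le {R : L →L[ℝ] L} (hR : PositiveOp R) (x : L) : |R x| ≤ R |x| :=
  abs_le'.mpr ⟨hR.mono (le_abs_self x), by simpa using hR.mono (neg_le_abs x)⟩

lemma OpLE.antisymm {S T : L →L[ℝ] L} (hST : OpLE S T) (hTS : OpLE T S) : S = T := by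
  have hpos : ∀ x : L, 0 ≤ x → S x = T x := fun x hx => le_antisymm (hST x hx) (hTS x hx)
  ext x
  rw [← posPart_sub_negPart x, map_sub, map_sub, hpos _ (posPart_nonneg x),
    hpos _ (negPart_nonneg x)]

variable [PosSMulMono ℝ L]

lemma disjComplement_isBand (S : Set L) : IsBand (disjComplement S) := by
  refine ⟨fun x y hxy hy s hs => inf_eq_zero_of_le (abs_nonneg x) hxy (hy s hs), ?_⟩
  rintro U ⟨y₀, hy₀⟩ hU x hx s hs
  have hpos : x⁺ ⊓ |s| = 0 := hx.posPart_inf_eq_zero (abs_nonneg s) fun u hu =>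
    inf_eq_zero_of_le (posPart_nonneg u) (sup_le (le_abs_self u) (abs_nonneg u)) (hU hu s hs)
  have hneg : x⁻ ⊓ |s| = 0 := inf_eq_zero_of_le (negPart_nonneg x)
    ((negPart_anti (hx.1 hy₀)).trans (sup_le (neg_le_abs y₀) (abs_nonneg y₀))) (hU hy₀ s hs)
  rw [← posPart_add_negPart]
  exact add_inf_eq_zero hpos hneg

end Operators

namespace IsBandProjection
variable {L : Type*} [NormedAddCommGroup L] [Lattice L] [IsOrderedAddMonoid L] [NormedSpace ℝ L]
  [PosSMulMono ℝ L] {P Q : L →L[ℝ] L} {B B' : Submodule ℝ L}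

lemma sub_apply_mem_disjComplement (hP : IsBandProjection P B) (x : L) :
    x - P x ∈ disjComplement (B : Set L) :=
  fun b hb => hP.2.2.2.2 x b hb

lemma apply_le (hP : IsBandProjection P B) {x : L} (hx : 0 ≤ x) : P x ≤ x := by
  have hPx : 0 ≤ P x := hP.1 x hx
  have hdisj : |x - P x| ⊓ |P x| = 0 := hP.sub_apply_mem_disjComplement x (P x) (hP.2.2.1 x)
  have hneg : (x - P x)⁻ ≤ |x - P x| ⊓ |P x| := by
    refine le_inf (sup_le (neg_le_abs _) (abs_nonneg _)) ?_
    rw [abs_of_nonneg hPx, negPart_def, neg_sub]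
    exact sup_le (sub_le_self _ hx) hPx
  exact sub_nonneg.mp (negPart_nonpos.mp (hdisj ▸ hneg))

lemma apply_eq_zero (hP : IsBandProjection P B) {x : L} (hx : x ∈ disjComplement (B : Set L)) :
    P x = 0 := by
  have habs : P |x| = 0 := by
    have hdisj : |x| ⊓ P |x| = 0 := by
      simpa [abs_of_nonneg (hP.1 _ (abs_nonneg x))] using hx (P |x|) (hP.2.2.1 |x|)
    exact le_antisymm (hdisj ▸ le_inf (hP.apply_le (abs_nonneg x)) le_rfl)
      (hP.1 _ (abs_nonneg x))
  exact eq_zero_of_abs_nonpos (habs ▸ hP.1.abs_apply_le x)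

lemma mem_disjComplement_of_apply_eq_zero (hP : IsBandProjection P B) {x : L} (h : P x = 0) :
    x ∈ disjComplement (B : Set L) := by
  simpa [h] using hP.sub_apply_mem_disjComplement x

lemma apply_apply_of_le (hP : IsBandProjection P B') (hQ : IsBandProjection Q B) (h : B' ≤ B)
    (x : L) : P (Q x) = P x := by
  have hsub : P (x - Q x) = 0 :=
    hP.apply_eq_zero (disjComplement_anti h (hQ.sub_apply_mem_disjComplement x))
  rw [map_sub, sub_eq_zero] at hsub
  exact hsub.symm

lemma one_sub (hP : IsBandProjection P B) :
    IsBandProjection (1 - P) (disjComplement (B : Set L)) := by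
  refine ⟨fun x hx => ?_, ?_, fun x => ?_, fun x hx => ?_, fun x b hb => ?_⟩
  · simpa using hP.apply_le hx
  · ext x
    simp [hP.apply_apply]
  · simpa using hP.sub_apply_mem_disjComplement x
  · simp [hP.apply_eq_zero hx]
  · simpa [inf_comm] using hb (P x) (hP.2.2.1 x)

lemma disjComplement_disjComplement (hP : IsBandProjection P B) :
    IsBandProjection P (disjComplement (disjComplement (B : Set L) : Set L)) := by
  refine ⟨hP.1, hP.2.1, fun x => subset_disjComplement_disjComplement _ (hP.2.2.1 x),
    fun x hx => ?_, fun x b hb => ?_⟩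
  · have hsub : x - P x = 0 := eq_zero_of_mem_disjComplement (hP.sub_apply_mem_disjComplement x)
      (Submodule.sub_mem _ hx (subset_disjComplement_disjComplement _ (hP.2.2.1 x)))
    exact (sub_eq_zero.mp hsub).symm
  · rw [inf_comm]
    exact hb _ (hP.sub_apply_mem_disjComplement x)

lemma mem_or_apply_eq_zero (hP : IsBandProjection P B) {a : L} (ha : IsLatAtom a) :
    a ∈ B ∨ P a = 0 := by
  obtain ⟨t, -, ht⟩ := ha.2.2 (P a) (hP.1 a ha.1) (hP.apply_le ha.1)
  have hidem := hP.apply_apply a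
  rw [ht, map_smul, ht, smul_smul] at hidem
  rcases mul_left_eq_self₀.mp (smul_left_injective ℝ ha.2.1 hidem) with h | h
  · left
    simpa [ht, h] using hP.2.2.1 a
  · right
    simp [ht, h]

end IsBandProjection

section Atoms
variable {L : Type*} [NormedAddCommGroup L] [Lattice L] [NormedSpace ℝ L]

lemma IsLatAtom.mem_span_of_inf_ne_zero {a c : L} (hc : IsLatAtom c) (ha : IsLatAtom a)
    (h : c ⊓ a ≠ 0) : c ∈ Submodule.span ℝ {a} := by
  obtain ⟨s, -, hs⟩ := hc.2.2 (c ⊓ a) (le_inf hc.1 ha.1) inf_le_left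
  obtain ⟨t, -, ht⟩ := ha.2.2 (c ⊓ a) (le_inf hc.1 ha.1) inf_le_right
  have hs0 : s ≠ 0 := by rintro rfl; exact h (by simpa using hs)
  refine Submodule.mem_span_singleton.mpr ⟨s⁻¹ * t, ?_⟩
  rw [← smul_smul, ← ht, hs, inv_smul_smul₀ hs0]

variable [IsOrderedAddMonoid L] [PosSMulMono ℝ L]

lemma abs_inf_abs_eq_zero_of_mem_span {a b x y : L} (hab : a ⊓ b = 0)
    (hx : x ∈ Submodule.span ℝ {a}) (hy : y ∈ Submodule.span ℝ {b}) : |x| ⊓ |y| = 0 := by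
  have ha : a ∈ disjComplement ({b} : Set L) := by
    rintro s rfl
    rwa [abs_of_nonneg (hab ▸ inf_le_left : (0 : L) ≤ a),
      abs_of_nonneg (hab ▸ inf_le_right : (0 : L) ≤ s)]
  have hspan : Submodule.span ℝ {a} ≤ disjComplement (Submodule.span ℝ {b} : Set L) := by
    rw [disjComplement_span]
    exact (Submodule.span_singleton_le_iff_mem _ _).mpr ha
  exact hspan hx y hy

variable {F : Finset L} {Pa : L → L →L[ℝ] L}

lemma sum_bandProj_apply_le (hdisj : (F : Set L).Pairwise fun a b => a ⊓ b = 0)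
    (hPa : ∀ a ∈ F, IsBandProjection (Pa a) (Submodule.span ℝ {a})) {y : L} (hy : 0 ≤ y) :
    ∑ a ∈ F, Pa a y ≤ y := by
  refine Finset.sum_le_of_pairwise_inf_eq_zero hy (fun a ha => (hPa a ha).1 y hy)
    (fun a ha b hb hab => ?_) (fun a ha => (hPa a ha).apply_le hy)
  have h := abs_inf_abs_eq_zero_of_mem_span (hdisj ha hb hab) ((hPa a ha).2.2.1 y)
    ((hPa b hb).2.2.1 y)
  rwa [abs_of_nonneg ((hPa a ha).1 y hy), abs_of_nonneg ((hPa b hb).1 y hy)] at h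

lemma sum_bandProj_compress_apply_le (hdisj : (F : Set L).Pairwise fun a b => a ⊓ b = 0)
    (hPa : ∀ a ∈ F, IsBandProjection (Pa a) (Submodule.span ℝ {a})) {R : L →L[ℝ] L}
    (hR : PositiveOp R) {x : L} (hx : 0 ≤ x) : ∑ a ∈ F, Pa a (R (Pa a x)) ≤ R x := by
  set E := ∑ a ∈ F, Pa a x
  have hE : 0 ≤ E := Finset.sum_nonneg fun a ha => (hPa a ha).1 x hx
  calc ∑ a ∈ F, Pa a (R (Pa a x)) ≤ ∑ a ∈ F, Pa a (R E) :=
        Finset.sum_le_sum fun a ha => (hPa a ha).1.mono <| hR.mono <|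
          Finset.single_le_sum (fun b hb => (hPa b hb).1 x hx) ha
    _ ≤ R E := sum_bandProj_apply_le hdisj hPa (hR E hE)
    _ ≤ R x := hR.mono (sum_bandProj_apply_le hdisj hPa hx)

end Atoms

section SchepSums
variable {L : Type*} [NormedAddCommGroup L] [Lattice L] [IsOrderedAddMonoid L] [NormedSpace ℝ L]
  [PosSMulMono ℝ L]

lemma IsBandProjection.compress_add_compress_one_sub_mem_schepSet {P : L →L[ℝ] L}
    {B : Submodule ℝ L} (hP : IsBandProjection P B) (T : L →L[ℝ] L) :
    P.comp (T.comp P) + (1 - P).comp (T.comp (1 - P)) ∈ SchepSet T := by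
  -- `B` need not be a band, but `P` also projects onto the band `Bᵈᵈ`.
  refine ⟨2, ![P, 1 - P], ![disjComplement (disjComplement (B : Set L) : Set L),
    disjComplement (B : Set L)], fun i => ?_, by simp [Fin.sum_univ_two],
    by simp [Fin.sum_univ_two]⟩
  fin_cases i
  · exact ⟨disjComplement_isBand _, hP.disjComplement_disjComplement⟩
  · exact ⟨disjComplement_isBand _, hP.one_sub⟩

/-- An atom lies in the band of `Q` or is killed by it, so compressing by `Q` is invisible
between two copies of the projection onto the atom. -/
lemma IsBandProjection.apply_apply_compress_eq {P Q : L →L[ℝ] L} {a : L} {B : Submodule ℝ L}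
    (hP : IsBandProjection P (Submodule.span ℝ {a})) (ha : IsLatAtom a)
    (hQ : IsBandProjection Q B) (T : L →L[ℝ] L) (x : L) :
    P (T (Q (P x))) = P (Q (T (Q (P x)))) := by
  rcases hQ.mem_or_apply_eq_zero ha with haB | hQa
  · have hle : Submodule.span ℝ {a} ≤ B := (Submodule.span_singleton_le_iff_mem _ _).mpr haB
    rw [hP.apply_apply_of_le hQ hle]
  · obtain ⟨t, ht⟩ := Submodule.mem_span_singleton.mp (hP.2.2.1 x)
    simp [← ht, hQa]

lemma diagSum_opLE_of_mem_schepSet {F : Finset L} {Pa : L → L →L[ℝ] L}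
    (hatom : ∀ a ∈ F, IsLatAtom a) (hdisj : (F : Set L).Pairwise fun a b => a ⊓ b = 0)
    (hPa : ∀ a ∈ F, IsBandProjection (Pa a) (Submodule.span ℝ {a}))
    {T : L →L[ℝ] L} (hT : PositiveOp T) {S : L →L[ℝ] L} (hS : S ∈ SchepSet T) :
    OpLE (∑ a ∈ F, (Pa a).comp (T.comp (Pa a))) S := by
  obtain ⟨m, Q, B, hQB, hsum, rfl⟩ := hS
  set R : Fin m → L →L[ℝ] L := fun i => (Q i).comp (T.comp (Q i))
  have hR : ∀ i, PositiveOp (R i) := fun i => (hQB i).2.1.comp (hT.comp (hQB i).2.1)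
  intro x hx
  have hsplit : ∀ a ∈ F, Pa a (T (Pa a x)) = ∑ i, Pa a (R i (Pa a x)) := fun a ha => by
    calc Pa a (T (Pa a x)) = Pa a (T ((∑ i, Q i) (Pa a x))) := by rw [hsum]; rfl
      _ = ∑ i, Pa a (T (Q i (Pa a x))) := by rw [sum_apply, map_sum, map_sum]
      _ = ∑ i, Pa a (R i (Pa a x)) := Finset.sum_congr rfl fun i _ =>
          (hPa a ha).apply_apply_compress_eq (hatom a ha) (hQB i).2 T x
  calc (∑ a ∈ F, (Pa a).comp (T.comp (Pa a))) x = ∑ a ∈ F, Pa a (T (Pa a x)) := by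
        simp [sum_apply]
    _ = ∑ a ∈ F, ∑ i, Pa a (R i (Pa a x)) := Finset.sum_congr rfl hsplit
    _ = ∑ i, ∑ a ∈ F, Pa a (R i (Pa a x)) := Finset.sum_comm
    _ ≤ ∑ i, R i x :=
        Finset.sum_le_sum fun i _ => sum_bandProj_compress_apply_le hdisj hPa (hR i) hx
    _ = (∑ i, R i) x := (sum_apply _ _ _).symm

end SchepSums

section AtomicDiagonal
variable {L : Type*} [NormedAddCommGroup L] [Lattice L] [IsOrderedAddMonoid L] [NormedSpace ℝ L]
  [PosSMulMono ℝ L] {A : Submodule ℝ L} {𝒜 : Set L} {Pa : L → L →L[ℝ] L}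
  {PA T D PT : L →L[ℝ] L}

lemma AtomicDiagOf.opLE_comp_centralPart (hA : ∀ a ∈ 𝒜, a ∈ A) (hPA : IsBandProjection PA A)
    (h𝒜 : MaxAtomFamily 𝒜) (hPa : ∀ a ∈ 𝒜, IsBandProjection (Pa a) (Submodule.span ℝ {a}))
    (hT : PositiveOp T) (hD : AtomicDiagOf 𝒜 Pa T D) (hPT : CentralPartOf T PT) :
    OpLE D (PA.comp PT) := by
  refine hD.2 _ fun F hF x hx => ?_
  set Δ := ∑ a ∈ F, (Pa a).comp (T.comp (Pa a))
  have hΔ : PositiveOp Δ := PositiveOp.sum fun a ha =>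
    (hPa a (hF ha)).1.comp (hT.comp (hPa a (hF ha)).1)
  have hΔPT : Δ x ≤ PT x :=
    hPT.2.2 Δ hΔ (fun S hS => diagSum_opLE_of_mem_schepSet (fun a ha => (h𝒜.1 a (hF ha)).1)
      (fun a ha b hb => h𝒜.2.1 a (hF ha) b (hF hb)) (fun a ha => hPa a (hF ha)) hT hS) x hx
  have hΔA : Δ x ∈ A := by
    rw [sum_apply]
    exact A.sum_mem fun a ha => (Submodule.span_singleton_le_iff_mem a A).mpr (hA a (hF ha))
      ((hPa a (hF ha)).2.2.1 _)
  calc Δ x = PA (Δ x) := (hPA.2.2.2.1 _ hΔA).symm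
    _ ≤ PA (PT x) := hPA.1.mono hΔPT

/-- Since `PT ≤ P T P + (1 - P) T (1 - P)` (a Schep sum), the excess of `P_A PT x` over
`y ≥ P T P x` lies below `P_A (1 - P) T (1 - P) x`, which `P` annihilates. -/
lemma posPart_sub_mem_disjComplement {P : L →L[ℝ] L} {a x y : L}
    (hPA : IsBandProjection PA A) (hP : IsBandProjection P (Submodule.span ℝ {a})) (haA : a ∈ A)
    (hT : PositiveOp T) (hPT : ∀ S ∈ SchepSet T, OpLE PT S) (hx : 0 ≤ x)
    (hy : P (T (P x)) ≤ y) : (PA (PT x) - y)⁺ ∈ disjComplement ({a} : Set L) := by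
  have hle : Submodule.span ℝ {a} ≤ A := (Submodule.span_singleton_le_iff_mem a A).mpr haA
  set r := PA ((1 - P) (T ((1 - P) x)))
  have hr : 0 ≤ r := hPA.1 _ (hP.one_sub.1 _ (hT _ (hP.one_sub.1 x hx)))
  have hPTr : PA (PT x) ≤ y + r := by
    have h := hPA.1.mono (hPT _ (hP.compress_add_compress_one_sub_mem_schepSet T) x hx)
    rw [add_apply, map_add] at h
    calc PA (PT x) ≤ PA (P (T (P x))) + r := h
      _ = P (T (P x)) + r := by rw [hPA.2.2.2.1 _ (hle (hP.2.2.1 _))]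
      _ ≤ y + r := add_le_add_left hy r
  have hPr : P r = 0 := by
    simp [r, hP.apply_apply_of_le hPA hle, hP.apply_apply]
  have hPδ : P (PA (PT x) - y)⁺ = 0 :=
    le_antisymm (hPr ▸ hP.1.mono (sup_le (sub_le_iff_le_add'.mpr hPTr) hr))
      (hP.1 _ (posPart_nonneg _))
  exact disjComplement_anti Submodule.subset_span (hP.mem_disjComplement_of_apply_eq_zero hPδ)

lemma IsAtomicBand.eq_zero_of_mem_disjComplement (hA : IsAtomicBand A) (h𝒜 : MaxAtomFamily 𝒜)
    {x : L} (hx : x ∈ A) (hx' : x ∈ disjComplement 𝒜) : x = 0 := by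
  have hA𝒜 : A ≤ disjComplement (disjComplement 𝒜 : Set L) :=
    hA.2.2 _ (disjComplement_isBand _) fun c hc => by
      obtain ⟨a, ha, hca⟩ := h𝒜.2.2 c hc
      exact (Submodule.span_singleton_le_iff_mem _ _).mpr
        (subset_disjComplement_disjComplement 𝒜 ha) (hc.mem_span_of_inf_ne_zero (h𝒜.1 a ha).1 hca)
  exact _root_.eq_zero_of_mem_disjComplement hx' (hA𝒜 hx)

lemma CentralPartOf.comp_opLE_atomicDiag (hA : IsAtomicBand A) (hPA : IsBandProjection PA A)
    (h𝒜 : MaxAtomFamily 𝒜) (hPa : ∀ a ∈ 𝒜, IsBandProjection (Pa a) (Submodule.span ℝ {a}))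
    (hT : PositiveOp T) (hD : AtomicDiagOf 𝒜 Pa T D) (hPT : CentralPartOf T PT) :
    OpLE (PA.comp PT) D := by
  intro x hx
  have hPAx : 0 ≤ PA (PT x) := hPA.1 _ (hPT.1 x hx)
  have hDx : 0 ≤ D x := by simpa using hD.1 ∅ (by simp) x hx
  have hδA : (PA (PT x) - D x)⁺ ∈ A := by
    refine hA.1.1 _ (PA (PT x)) ?_ (hPA.2.2.1 _)
    rw [abs_of_nonneg (posPart_nonneg _), abs_of_nonneg hPAx]
    exact sup_le (sub_le_self _ hDx) hPAx
  have hδ𝒜 : (PA (PT x) - D x)⁺ ∈ disjComplement 𝒜 := fun a ha =>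
    posPart_sub_mem_disjComplement hPA (hPa a ha) (hA.2.1 a (h𝒜.1 a ha).1) hT hPT.2.1 hx
      (by simpa using hD.1 {a} (by simpa using ha) x hx) a rfl
  exact sub_nonpos.mp (posPart_eq_zero.mp (hA.eq_zero_of_mem_disjComplement h𝒜 hδA hδ𝒜))

end AtomicDiagonal

theorem stmt5_general {L : Type*} [NormedAddCommGroup L] [Lattice L] [HasSolidNorm L] [IsOrderedAddMonoid L] [NormedSpace ℝ L]
    (A : Submodule ℝ L) (hA : IsAtomicBand A)
    (PA : L →L[ℝ] L) (hPA : IsBandProjection PA A)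
    (𝒜 : Set L) (h𝒜 : MaxAtomFamily 𝒜)
    (Pa : L → (L →L[ℝ] L)) (hPa : ∀ a ∈ 𝒜, IsBandProjection (Pa a) (Submodule.span ℝ {a}))
    (T : L →L[ℝ] L) (hT : PositiveOp T)
    (D : L →L[ℝ] L) (hD : AtomicDiagOf 𝒜 Pa T D)
    (PT : L →L[ℝ] L) (hPT : CentralPartOf T PT) :
    D = PA.comp PT :=
  OpLE.antisymm
    (hD.opLE_comp_centralPart (fun a ha => hA.2.1 a (h𝒜.1 a ha).1) hPA h𝒜 hPa hT hPT)
    (hPT.comp_opLE_atomicDiag hA hPA h𝒜 hPa hT hD)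

theorem stmt5 {L : Type*} [NormedAddCommGroup L] [Lattice L] [HasSolidNorm L] [IsOrderedAddMonoid L] [NormedSpace ℝ L]
    [CompleteSpace L] (hdc : DedekindComplete L)
    (A : Submodule ℝ L) (hA : IsAtomicBand A)
    (PA : L →L[ℝ] L) (hPA : IsBandProjection PA A)
    (𝒜 : Set L) (h𝒜 : MaxAtomFamily 𝒜)
    (Pa : L → (L →L[ℝ] L)) (hPa : ∀ a ∈ 𝒜, IsBandProjection (Pa a) (Submodule.span ℝ {a}))
    (T : L →L[ℝ] L) (hT : PositiveOp T)
    (D : L →L[ℝ] L) (hD : AtomicDiagOf 𝒜 Pa T D)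
    (PT : L →L[ℝ] L) (hPT : CentralPartOf T PT) :
    D = PA.comp PT :=
  stmt5_general A hA PA hPA 𝒜 h𝒜 Pa hPa T hT D hD PT hPT
end

section
/- Let L be a Banach lattice with order continuous norm and P a positive finite-rank idempotent on L. Let B1 be the absolute kernel of P, B the band generated by B1 together with the range of P, B2 = B ∩ B1^d and B3 = B^d. Then with respect to L = B1 ⊕ B2 ⊕ B3, P has block matrix [[0, XQ, XQY],[0, Q, QY],[0, 0, 0]] where Q is an idempotent on B2 of the same rank as P such that both Q and Q* are strictly positive. -/
open Filter Topology

/-!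
`P` kills its absolute kernel `B₁`, and `P₃` kills the band `B ⊇ range P`, so `P P₁ = 0` and
`P₃ P = 0`; expanding `P = P (P₁ + P₂ + P₃) P` then gives `P P₂ P = P`. Together with `P₂² = P₂`
this relation yields every block identity for `Q = P₂ P P₂`, and it makes `P₂` and `P` mutually
inverse between the ranges of `P` and `Q`. If `Q |x| = 0` with `x ∈ B₂`, then
`P |x| = P P₂ P |x| = 0`, so `x ∈ B₁ ∩ B₁ᵈ`. If a positive `φ` vanishes on the range of `Q`, then,
as `P₂ P = Q P`, the absolute kernel of `φ ∘ P₂` contains `B₁` and the range of `P`; it is a closed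
ideal, hence a band by order continuity, so it contains `B ⊇ B₂`.
-/

section LatticeOrderedGroup

variable {α : Type*} [Lattice α] [AddCommGroup α] [IsOrderedAddMonoid α]

lemma eq_zero_of_abs_nonpos_s10 {a : α} (h : |a| ≤ 0) : a = 0 :=
  le_antisymm ((le_abs_self a).trans h) (neg_nonpos.1 ((neg_le_abs a).trans h))

lemma inf_add_le_inf_add_inf {a b c : α} (ha : 0 ≤ a) (hb : 0 ≤ b) (hc : 0 ≤ c) :
    a ⊓ (b + c) ≤ a ⊓ b + a ⊓ c := by
  rw [inf_add, add_inf, add_inf]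
  refine le_inf (le_inf ?_ ?_) (le_inf ?_ inf_le_right)
  · exact inf_le_left.trans (le_add_of_nonneg_right ha)
  · exact inf_le_left.trans (le_add_of_nonneg_right hc)
  · exact inf_le_left.trans (le_add_of_nonneg_left hb)

lemma eq_zero_of_abs_inf_eq_zero_of_abs_sub_inf_eq_zero {u z : α} (hz : |u| ⊓ |z| = 0)
    (hzu : |u| ⊓ |z - u| = 0) : u = 0 := by
  have hle : |u| ≤ |z| + |z - u| := by
    simpa [abs_neg, abs_sub_comm u z] using abs_add_le z (-(z - u))
  refine eq_zero_of_abs_nonpos_s10 ?_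
  calc |u| = |u| ⊓ (|z| + |z - u|) := (inf_eq_left.2 hle).symm
    _ ≤ |u| ⊓ |z| + |u| ⊓ |z - u| :=
      inf_add_le_inf_add_inf (abs_nonneg u) (abs_nonneg z) (abs_nonneg _)
    _ = 0 := by rw [hz, hzu, add_zero]

lemma nonneg_of_two_pow_nsmul_nonneg {a : α} (m : ℕ) (h : 0 ≤ 2 ^ m • a) : 0 ≤ a := by
  induction m generalizing a with
  | zero => simpa using h
  | succ m ih => exact nsmul_two_semiclosed (ih (by rwa [← mul_nsmul', ← pow_succ]))

end LatticeOrderedGroup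

lemma abs_map_le_map_abs {α β F : Type*} [Lattice α] [AddCommGroup α] [Lattice β] [AddCommGroup β]
    [FunLike F α β] [AddMonoidHomClass F α β] {T : F} (hT : Monotone T) (x : α) :
    |T x| ≤ T |x| :=
  abs_le'.2 ⟨hT (le_abs_self x), by rw [← map_neg]; exact hT (neg_le_abs x)⟩

lemma map_abs_nonneg {α β F : Type*} [Lattice α] [AddCommGroup α] [IsOrderedAddMonoid α]
    [Preorder β] [AddCommGroup β] [FunLike F α β] [AddMonoidHomClass F α β] {T : F}
    (hT : Monotone T) (x : α) : 0 ≤ T |x| :=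
  map_zero T ▸ hT (abs_nonneg x)

lemma map_eq_zero_of_map_abs_eq_zero {α β F : Type*} [Lattice α] [AddCommGroup α] [Lattice β]
    [AddCommGroup β] [IsOrderedAddMonoid β] [FunLike F α β] [AddMonoidHomClass F α β] {T : F}
    (hT : Monotone T) {x : α} (h : T |x| = 0) : T x = 0 :=
  eq_zero_of_abs_nonpos_s10 (h ▸ abs_map_le_map_abs hT x)

section OrderedNormedSpace

variable {L : Type*} [NormedAddCommGroup L] [Lattice L] [IsOrderedAddMonoid L] [NormedSpace ℝ L]

lemma PositiveOp.monotone {T : L →L[ℝ] L} (hT : PositiveOp T) : Monotone T :=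
  (monotone_iff_map_nonneg T).2 hT

lemma IsBandProjection.eq_zero_of_abs_inf_eq_zero {P : L →L[ℝ] L} {C : Submodule ℝ L}
    (hP : IsBandProjection P C) {z : L} (h : |P z| ⊓ |z| = 0) : P z = 0 :=
  eq_zero_of_abs_inf_eq_zero_of_abs_sub_inf_eq_zero h
    (by rw [inf_comm]; exact hP.2.2.2.2 z (P z) (hP.2.2.1 z))

lemma IsOrderIdeal.abs_mem {J : Submodule ℝ L} (hJ : IsOrderIdeal J) {x : L} (hx : x ∈ J) :
    |x| ∈ J :=
  hJ _ _ (abs_abs x).le hx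

lemma IsOrderIdeal.sup_mem {J : Submodule ℝ L} (hJ : IsOrderIdeal J) {a b : L} (ha : a ∈ J)
    (hb : b ∈ J) : a ⊔ b ∈ J := by
  rw [sup_eq_half_smul_add_add_abs_sub' ℝ]
  exact J.smul_mem _ (J.add_mem (J.add_mem ha hb) (hJ.abs_mem (J.sub_mem hb ha)))

end OrderedNormedSpace

lemma OrderContinuousNorm.exists_norm_sub_lt_of_isLUB {L : Type*} [NormedAddCommGroup L]
    [Lattice L] [HasSolidNorm L] [IsOrderedAddMonoid L] (hoc : OrderContinuousNorm L)
    {S : Set L} {x : L} (hne : S.Nonempty) (hdir : DirectedOn (· ≤ ·) S) (hx : IsLUB S x)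
    {ε : ℝ} (hε : 0 < ε) : ∃ s ∈ S, ‖x - s‖ < ε := by
  have hdir' : DirectedOn (· ≥ ·) ((x - ·) '' S) := by
    rintro _ ⟨s, hs, rfl⟩ _ ⟨t, ht, rfl⟩
    obtain ⟨u, hu, hsu, htu⟩ := hdir s hs t ht
    exact ⟨x - u, ⟨u, hu, rfl⟩, sub_le_sub_left hsu x, sub_le_sub_left htu x⟩
  have hglb : IsGLB ((x - ·) '' S) 0 := by
    refine ⟨?_, fun c hc ↦ ?_⟩
    · rintro _ ⟨s, hs, rfl⟩
      exact sub_nonneg.2 (hx.1 hs)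
    · have : x ≤ x - c := hx.2 fun s hs ↦ le_sub_comm.1 (hc ⟨s, hs, rfl⟩)
      simpa using this
  obtain ⟨_, ⟨s, hs, rfl⟩, hlt⟩ := hoc _ (hne.image _) hdir' hglb ε hε
  exact ⟨s, hs, hlt⟩

section NormedLattice

variable {L : Type*} [NormedAddCommGroup L] [Lattice L] [HasSolidNorm L] [IsOrderedAddMonoid L]
  [NormedSpace ℝ L]

/-- The positive cone is closed and contains the dyadic multiples `(k / 2 ^ m) • x`, which are
dense among the nonnegative multiples of `x`. -/
theorem smul_nonneg_of_nonneg {c : ℝ} {x : L} (hc : 0 ≤ c) (hx : 0 ≤ x) : 0 ≤ c • x := by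
  have dyadic (m : ℕ) : 0 ≤ ((⌊c * 2 ^ m⌋₊ : ℝ) / 2 ^ m) • x := by
    refine nonneg_of_two_pow_nsmul_nonneg m ?_
    rw [← Nat.cast_smul_eq_nsmul ℝ, smul_smul, Nat.cast_pow, Nat.cast_ofNat,
      mul_div_cancel₀ _ (by positivity), Nat.cast_smul_eq_nsmul]
    exact nsmul_nonneg hx _
  have hlim : Tendsto (fun m : ℕ ↦ (⌊c * 2 ^ m⌋₊ : ℝ) / 2 ^ m) atTop (𝓝 c) :=
    (tendsto_nat_floor_mul_div_atTop hc).comp (tendsto_pow_atTop_atTop_of_one_lt one_lt_two)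
  exact isClosed_nonneg.mem_of_tendsto (hlim.smul_const x) (Eventually.of_forall dyadic)

instance : PosSMulMono ℝ L :=
  PosSMulMono.of_smul_nonneg fun _ hc _ hx ↦ smul_nonneg_of_nonneg hc hx

lemma abs_smul_le (c : ℝ) (z : L) : |c • z| ≤ |c| • |z| := by
  have of_nonneg {c : ℝ} (hc : 0 ≤ c) (z : L) : |c • z| ≤ c • |z| := by
    rw [abs_le', ← smul_neg]
    exact ⟨smul_le_smul_of_nonneg_left (le_abs_self z) hc,
      smul_le_smul_of_nonneg_left (neg_le_abs z) hc⟩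
  rcases le_total 0 c with hc | hc
  · simpa [abs_of_nonneg hc] using of_nonneg hc z
  · simpa [abs_of_nonpos hc] using of_nonneg (neg_nonneg.2 hc) (-z)

theorem IsOrderIdeal.isBand_of_isClosed (hoc : OrderContinuousNorm L) {J : Submodule ℝ L}
    (hJ : IsOrderIdeal J) (hcl : IsClosed (J : Set L)) : IsBand J := by
  refine ⟨hJ, fun A hne hAJ x hx ↦ hcl.closure_subset (Metric.mem_closure_iff.2 ?_)⟩
  obtain ⟨a, ha⟩ := hne
  set S := {s | s ∈ J ∧ s ≤ x}
  have hdir : DirectedOn (· ≤ ·) S := fun s hs t ht ↦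
    ⟨s ⊔ t, ⟨hJ.sup_mem hs.1 ht.1, sup_le hs.2 ht.2⟩, le_sup_left, le_sup_right⟩
  have hS : IsLUB S x := ⟨fun s hs ↦ hs.2, fun u hu ↦ hx.2 fun b hb ↦ hu ⟨hAJ hb, hx.1 hb⟩⟩
  intro ε hε
  obtain ⟨s, hs, hlt⟩ := hoc.exists_norm_sub_lt_of_isLUB (S := S) ⟨a, hAJ ha, hx.1 ha⟩ hdir hS hε
  exact ⟨s, hs.1, by rwa [dist_eq_norm]⟩

section AbsKer

variable {M : Type*} [NormedAddCommGroup M] [PartialOrder M] [NormedSpace ℝ M]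

def absKer (T : L →L[ℝ] M) (hT : Monotone T) : Submodule ℝ L where
  carrier := {x | T |x| = 0}
  zero_mem' := by simp
  add_mem' {a b} (ha : T |a| = 0) (hb : T |b| = 0) :=
    le_antisymm (by simpa [ha, hb] using hT (abs_add_le a b)) (map_abs_nonneg hT _)
  smul_mem' c z (hz : T |z| = 0) :=
    le_antisymm (by simpa [hz] using hT (abs_smul_le c z)) (map_abs_nonneg hT _)

variable (T : L →L[ℝ] M) (hT : Monotone T)

lemma mem_absKer {x : L} : x ∈ absKer T hT ↔ T |x| = 0 := Iff.rfl

lemma absKer_isOrderIdeal : IsOrderIdeal (absKer T hT) := fun x y hxy (hy : T |y| = 0) ↦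
  le_antisymm (hy ▸ hT hxy) (map_abs_nonneg hT x)

lemma isClosed_absKer : IsClosed (absKer T hT : Set L) :=
  isClosed_singleton.preimage (T.continuous.comp (continuous_id.sup continuous_neg))

theorem absKer_isBand (hoc : OrderContinuousNorm L) : IsBand (absKer T hT) :=
  (absKer_isOrderIdeal T hT).isBand_of_isClosed hoc (isClosed_absKer T hT)

end AbsKer

end NormedLattice

lemma mul_mul_eq_self_of_add_add_eq_one {R : Type*} [Ring R] {p a b c : R} (hsum : a + b + c = 1)
    (hpa : p * a = 0) (hcp : c * p = 0) (hp : p * p = p) : p * (b * p) = p := by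
  obtain rfl : b = 1 - a - c := by rw [← hsum]; abel
  rw [sub_mul, sub_mul, one_mul, hcp, sub_zero, mul_sub, ← mul_assoc, hpa, zero_mul, sub_zero, hp]

lemma mul_mul_mul_mul_mul_eq_mul_mul {M : Type*} [Monoid M] {p e : M} (he : e * e = e)
    (hpep : p * (e * p) = p) (f g : M) : f * (p * e) * (e * (p * g)) = f * (p * g) := by
  calc f * (p * e) * (e * (p * g)) = f * (p * (e * p) * g) := by
        simp only [mul_assoc]; rw [← mul_assoc e e, he]
    _ = f * (p * g) := by rw [hpep]

lemma finrank_range_mul_mul_eq {K V : Type*} [Semiring K] [AddCommMonoid V] [Module K V]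
    {p e : Module.End K V} (hpep : p * (e * p) = p) :
    Module.finrank K (LinearMap.range (e * (p * e))) = Module.finrank K (LinearMap.range p) := by
  have hpep' (x : V) : p (e (p x)) = p x := LinearMap.congr_fun hpep x
  let toRangeP : LinearMap.range (e * (p * e)) →ₗ[K] LinearMap.range p :=
    p.restrict fun x _ ↦ LinearMap.mem_range_self p x
  let ofRangeP : LinearMap.range p →ₗ[K] LinearMap.range (e * (p * e)) :=
    e.restrict fun _ ⟨y, hy⟩ ↦ ⟨p y, by simp [← hy, hpep']⟩
  refine (LinearEquiv.ofLinearMap toRangeP ofRangeP ?_ ?_).finrank_eq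
  · ext ⟨_, y, rfl⟩
    simp [toRangeP, ofRangeP, hpep']
  · ext ⟨_, y, rfl⟩
    simp [toRangeP, ofRangeP, hpep']

section Compression

variable {L : Type*} [NormedAddCommGroup L] [Lattice L] [IsOrderedAddMonoid L] [NormedSpace ℝ L]
  {P E : L →L[ℝ] L}

theorem eq_zero_of_compression_apply_abs_eq_zero {N C : Submodule ℝ L}
    (hN : ∀ x, x ∈ N ↔ P |x| = 0) (hPEP : P * (E * P) = P)
    (hC : ∀ x ∈ C, E |x| = |x| ∧ ∀ y ∈ N, |x| ⊓ |y| = 0) {x : L} (hx : x ∈ C)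
    (h : E (P (E |x|)) = 0) : x = 0 := by
  obtain ⟨hEx, hdisj⟩ := hC x hx
  have hPx : P |x| = 0 := by
    have hPEP' : P (E (P (E |x|))) = P |x| := by rw [hEx]; exact DFunLike.congr_fun hPEP |x|
    rw [← hPEP', h, map_zero]
  exact eq_zero_of_abs_nonpos_s10 (by simpa using (hdisj x ((hN x).2 hPx)).le)

variable [HasSolidNorm L]

theorem eq_zero_of_comp_compression_eq_zero (hoc : OrderContinuousNorm L) (hP : Monotone P)
    (hE : Monotone E) (hPEP : P * (E * P) = P) {N B C : Submodule ℝ L}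
    (hEN : ∀ y ∈ N, E |y| = 0)
    (hB : ∀ B' : Submodule ℝ L, IsBand B' → N ≤ B' → (∀ x, P x ∈ B') → B ≤ B')
    (hC : ∀ x ∈ C, x ∈ B ∧ E |x| = |x|) {φ : L →L[ℝ] ℝ} (hφ : Monotone φ)
    (hφQ : ∀ x, φ (E (P (E x))) = 0) {x : L} (hx : x ∈ C) : φ x = 0 := by
  have hφEP (v : L) : φ (E (P v)) = 0 := by
    have hPEP' : P (E (P v)) = P v := DFunLike.congr_fun hPEP v
    rw [← hPEP']
    exact hφQ (P v)
  have hφE : Monotone (φ.comp E) := hφ.comp hE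
  have hNJ : N ≤ absKer (φ.comp E) hφE := fun y hy ↦ by
    rw [mem_absKer, ContinuousLinearMap.comp_apply, hEN y hy, map_zero]
  have hPJ (w : L) : P w ∈ absKer (φ.comp E) hφE := by
    have hPw : |P (|w|)| = P |w| := abs_of_nonneg (map_abs_nonneg hP w)
    refine absKer_isOrderIdeal _ _ _ (P |w|) ((abs_map_le_map_abs hP w).trans_eq hPw.symm) ?_
    rw [mem_absKer, ContinuousLinearMap.comp_apply, hPw, hφEP]
  obtain ⟨hxB, hEx⟩ := hC x hx
  have hxJ := hB _ (absKer_isBand _ _ hoc) hNJ hPJ hxB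
  rw [mem_absKer, ContinuousLinearMap.comp_apply, hEx] at hxJ
  exact map_eq_zero_of_map_abs_eq_zero hφ hxJ

end Compression

theorem stmt10_general {L : Type*} [NormedAddCommGroup L] [Lattice L] [HasSolidNorm L] [IsOrderedAddMonoid L] [NormedSpace ℝ L]
    (hoc : OrderContinuousNorm L)
    (P : L →L[ℝ] L) (hP : PositiveOp P) (hidem : P.comp P = P)
    (r : ℕ)
    (hr : Module.finrank ℝ ↥(LinearMap.range (P : L →ₗ[ℝ] L)) = r)
    -- B1 is the absolute kernel of P:
    (B1 : Submodule ℝ L) (hB1 : ∀ x : L, x ∈ B1 ↔ P |x| = 0)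
    -- B is the band generated by B1 together with the range of P:
    (B : Submodule ℝ L) (hB : IsBand B ∧ B1 ≤ B ∧ (∀ x : L, P x ∈ B) ∧
      ∀ B' : Submodule ℝ L, IsBand B' → B1 ≤ B' → (∀ x : L, P x ∈ B') → B ≤ B')
    -- B2 = B ∩ B1ᵈ and B3 = Bᵈ:
    (B2 : Submodule ℝ L) (hB2 : ∀ x : L, x ∈ B2 ↔ x ∈ B ∧ ∀ y ∈ B1, |x| ⊓ |y| = 0)
    (B3 : Submodule ℝ L) (hB3 : ∀ x : L, x ∈ B3 ↔ ∀ y ∈ B, |x| ⊓ |y| = 0)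
    (P1 P2 P3 : L →L[ℝ] L) (hP1 : IsBandProjection P1 B1)
    (hP2 : IsBandProjection P2 B2) (hP3 : IsBandProjection P3 B3)
    (hsum : P1 + P2 + P3 = 1) :
    -- with Q the middle compression of P, the block matrix of P is
    -- [[0, XQ, XQY], [0, Q, QY], [0, 0, 0]]:
    ∀ Q : L →L[ℝ] L, Q = P2.comp (P.comp P2) →
      P.comp P1 = 0 ∧ P3.comp P = 0 ∧
      Q.comp Q = Q ∧
      (P1.comp (P.comp P2)) = (P1.comp (P.comp P2)).comp Q ∧
      (P2.comp (P.comp P3)) = Q.comp (P2.comp (P.comp P3)) ∧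
      (P1.comp (P.comp P3)) = (P1.comp (P.comp P2)).comp (P2.comp (P.comp P3)) ∧
      Module.finrank ℝ ↥(LinearMap.range (Q : L →ₗ[ℝ] L)) = r ∧
      (∀ x ∈ B2, Q |x| = 0 → x = 0) ∧
      ∀ φ : L →L[ℝ] ℝ, (∀ x : L, 0 ≤ x → 0 ≤ φ x) → (∀ x : L, φ (Q x) = 0) →
        ∀ x ∈ B2, φ x = 0 := by
  rintro _ rfl
  have hPP1 : P.comp P1 = 0 := ContinuousLinearMap.ext fun w ↦
    map_eq_zero_of_map_abs_eq_zero hP.monotone ((hB1 _).1 (hP1.2.2.1 w))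
  have hP3P : P3.comp P = 0 := ContinuousLinearMap.ext fun w ↦
    hP3.eq_zero_of_abs_inf_eq_zero ((hB3 _).1 (hP3.2.2.1 _) _ (hB.2.2.1 w))
  have hPP2P : P * (P2 * P) = P := mul_mul_eq_self_of_add_add_eq_one hsum hPP1 hP3P hidem
  have block := mul_mul_mul_mul_mul_eq_mul_mul hP2.2.1 hPP2P
  have hB2abs (x : L) (hx : x ∈ B2) : |x| ∈ B2 ∧ ∀ y ∈ B1, |x| ⊓ |y| = 0 := by
    obtain ⟨hxB, hdisj⟩ := (hB2 x).1 hx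
    exact ⟨(hB2 |x|).2 ⟨hB.1.1 _ _ (abs_abs x).le hxB, by simpa only [abs_abs] using hdisj⟩, hdisj⟩
  have hP2fix (x : L) (hx : x ∈ B2) : P2 |x| = |x| := hP2.2.2.2.1 _ (hB2abs x hx).1
  have hP2B1 (y : L) (hy : y ∈ B1) : P2 |y| = 0 := hP2.eq_zero_of_abs_inf_eq_zero
    (((hB2 _).1 (hP2.2.2.1 _)).2 _ ((hB1 _).2 (by rw [abs_abs]; exact (hB1 y).1 hy)))
  refine ⟨hPP1, hP3P, block P2 P2, (block P1 P2).symm, (block P2 P3).symm, (block P1 P3).symm,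
    (finrank_range_mul_mul_eq (congrArg ContinuousLinearMap.toLinearMap hPP2P)).trans hr,
    fun x hx ↦ eq_zero_of_compression_apply_abs_eq_zero hB1 hPP2P
      (fun x hx ↦ ⟨hP2fix x hx, (hB2abs x hx).2⟩) hx,
    fun φ hφ hφQ x hx ↦ eq_zero_of_comp_compression_eq_zero hoc hP.monotone hP2.1.monotone hPP2P
      hP2B1 hB.2.2.2 (fun x hx ↦ ⟨((hB2 x).1 hx).1, hP2fix x hx⟩)
      ((monotone_iff_map_nonneg φ).2 hφ) hφQ hx⟩

theorem stmt10 {L : Type*} [NormedAddCommGroup L] [Lattice L] [HasSolidNorm L] [IsOrderedAddMonoid L] [NormedSpace ℝ L]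
    [CompleteSpace L] (hoc : OrderContinuousNorm L)
    (P : L →L[ℝ] L) (hP : PositiveOp P) (hidem : P.comp P = P)
    (r : ℕ) (hfd : FiniteDimensional ℝ ↥(LinearMap.range (P : L →ₗ[ℝ] L)))
    (hr : Module.finrank ℝ ↥(LinearMap.range (P : L →ₗ[ℝ] L)) = r)
    -- B1 is the absolute kernel of P:
    (B1 : Submodule ℝ L) (hB1 : ∀ x : L, x ∈ B1 ↔ P |x| = 0)
    -- B is the band generated by B1 together with the range of P:
    (B : Submodule ℝ L) (hB : IsBand B ∧ B1 ≤ B ∧ (∀ x : L, P x ∈ B) ∧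
      ∀ B' : Submodule ℝ L, IsBand B' → B1 ≤ B' → (∀ x : L, P x ∈ B') → B ≤ B')
    -- B2 = B ∩ B1ᵈ and B3 = Bᵈ:
    (B2 : Submodule ℝ L) (hB2 : ∀ x : L, x ∈ B2 ↔ x ∈ B ∧ ∀ y ∈ B1, |x| ⊓ |y| = 0)
    (B3 : Submodule ℝ L) (hB3 : ∀ x : L, x ∈ B3 ↔ ∀ y ∈ B, |x| ⊓ |y| = 0)
    (P1 P2 P3 : L →L[ℝ] L) (hP1 : IsBandProjection P1 B1)
    (hP2 : IsBandProjection P2 B2) (hP3 : IsBandProjection P3 B3)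
    (hsum : P1 + P2 + P3 = 1) :
    -- with Q the middle compression of P, the block matrix of P is
    -- [[0, XQ, XQY], [0, Q, QY], [0, 0, 0]]:
    ∀ Q : L →L[ℝ] L, Q = P2.comp (P.comp P2) →
      P.comp P1 = 0 ∧ P3.comp P = 0 ∧
      Q.comp Q = Q ∧
      (P1.comp (P.comp P2)) = (P1.comp (P.comp P2)).comp Q ∧
      (P2.comp (P.comp P3)) = Q.comp (P2.comp (P.comp P3)) ∧
      (P1.comp (P.comp P3)) = (P1.comp (P.comp P2)).comp (P2.comp (P.comp P3)) ∧
      Module.finrank ℝ ↥(LinearMap.range (Q : L →ₗ[ℝ] L)) = r ∧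
      (∀ x ∈ B2, Q |x| = 0 → x = 0) ∧
      ∀ φ : L →L[ℝ] ℝ, (∀ x : L, 0 ≤ x → 0 ≤ φ x) → (∀ x : L, φ (Q x) = 0) →
        ∀ x ∈ B2, φ x = 0 :=
  stmt10_general hoc P hP hidem r hr B1 hB1 B hB B2 hB2 B3 hB3 P1 P2 P3 hP1 hP2 hP3 hsum
end

section
/- Let S be a multiplicative semigroup of nonnegative n×n real matrices such that each S ∈ S is permutation-similar to an upper triangular matrix, and such that the diagonal of ST equals the diagonal of TS for all S, T ∈ S. Then there is a single permutation matrix P such that every matrix in P S P⁻¹ is upper triangular. -/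
/-!
If `A, B ∈ 𝒮` had `A u v > 0` and `B v u > 0` with `u ≠ v`, then `(A * B) u u > A u u * B u u`,
so `(B * A) u u = ∑ w, B u w * A w u` needs another index `w ≠ u` with `A w u > 0` and
`B u w > 0`. Iterating moves `u` strictly down the triangular order of `A`, which is impossible.
Hence "some matrix of `𝒮` has a positive `(x, y)` entry" is an antisymmetric relation, and it is
transitive because `𝒮` is a semigroup of nonnegative matrices. Ordering the indices by the number
of their predecessors in this partial order makes every matrix of `𝒮` upper triangular.
-/

open Finset Matrix

section Semiring

variable {ι R : Type*} [Fintype ι] [CommSemiring R] [LinearOrder R] [IsStrictOrderedRing R]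

theorem Matrix.mul_apply_pos {A B : Matrix ι ι R} (hA : ∀ i j, 0 ≤ A i j)
    (hB : ∀ i j, 0 ≤ B i j) {x y z : ι} (hAxy : 0 < A x y) (hByz : 0 < B y z) :
    0 < (A * B) x z :=
  sum_pos' (fun k _ => mul_nonneg (hA x k) (hB k z)) ⟨y, mem_univ y, mul_pos hAxy hByz⟩

theorem Matrix.exists_pos_pos_of_mul_apply_diag_eq {A B : Matrix ι ι R}
    (hA : ∀ i j, 0 ≤ A i j) (hB : ∀ i j, 0 ≤ B i j) {u v : ι}
    (hdiag : (A * B) u u = (B * A) u u) (huv : u ≠ v) (hAuv : 0 < A u v) (hBvu : 0 < B v u) :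
    ∃ w, w ≠ u ∧ 0 < A w u ∧ 0 < B u w := by
  classical
  by_contra! hno
  have hBA : (B * A) u u = A u u * B u u := by
    rw [mul_apply, Finset.sum_eq_single u (fun w _ hw => ?_) (by simp), mul_comm]
    rcases (hA w u).eq_or_lt with h | h
    · rw [← h, mul_zero]
    · rw [le_antisymm (hno w hw h) (hB u w), zero_mul]
  have hAB : A u u * B u u + A u v * B v u ≤ (A * B) u u := by
    rw [mul_apply]
    calc A u u * B u u + A u v * B v u = ∑ k ∈ {u, v}, A u k * B k u :=
        (sum_pair (f := fun k => A u k * B k u) huv).symm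
      _ ≤ _ := sum_le_sum_of_subset_of_nonneg (subset_univ _)
        fun k _ _ => mul_nonneg (hA u k) (hB k u)
  rw [hdiag, hBA] at hAB
  exact (lt_add_of_pos_right _ (mul_pos hAuv hBvu)).not_ge hAB

theorem Matrix.eq_of_pos_of_pos_of_blockTriangular {α : Type*} [LinearOrder α] {b : ι → α}
    {A B : Matrix ι ι R} (hA : ∀ i j, 0 ≤ A i j) (hB : ∀ i j, 0 ≤ B i j)
    (hdiag : ∀ i, (A * B) i i = (B * A) i i) (htri : A.BlockTriangular b)
    (hb : Function.Injective b) {i j : ι} (hAij : 0 < A i j) (hBji : 0 < B j i) : i = j := by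
  classical
  by_contra hij
  set bad := univ.filter fun u => ∃ v, u ≠ v ∧ 0 < A u v ∧ 0 < B v u
  obtain ⟨u, hu, hmin⟩ := bad.exists_min_image b ⟨i, by simpa [bad] using ⟨j, hij, hAij, hBji⟩⟩
  obtain ⟨v, huv, hAuv, hBvu⟩ := (mem_filter.1 hu).2
  obtain ⟨w, hwu, hAwu, hBuw⟩ := exists_pos_pos_of_mul_apply_diag_eq hA hB (hdiag u) huv hAuv hBvu
  have hbwu : b w < b u :=
    (not_lt.1 fun h => hAwu.ne' (htri h)).lt_of_ne (hb.ne hwu)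
  exact hbwu.not_ge (hmin w (by simpa [bad] using ⟨u, hwu, hAwu, hBuw⟩))

end Semiring

theorem Relation.exists_rank_lt_of_rel_of_ne {ι : Type*} [Fintype ι]
    {r : ι → ι → Prop} [IsTrans ι r] [Std.Antisymm r] :
    ∃ f : ι → ℕ, ∀ x y, r x y → x ≠ y → f x < f y := by
  classical
  refine ⟨fun y => #{z | Relation.ReflGen r z y}, fun x y hxy hne => card_lt_card ?_⟩
  refine ssubset_iff_of_subset (fun z hz => ?_) |>.2 ⟨y, ?_, ?_⟩
  · simp only [mem_filter, mem_univ, true_and] at hz ⊢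
    exact _root_.trans hz (Relation.ReflGen.single hxy)
  · simp [Relation.ReflGen.refl]
  · simp only [mem_filter, mem_univ, true_and]
    rintro (_ | hyx)
    exacts [hne rfl, hne (antisymm hxy hyx)]

theorem Relation.exists_perm_forall_lt_not_rel {n : ℕ} {r : Fin n → Fin n → Prop}
    [IsTrans (Fin n) r] [Std.Antisymm r] :
    ∃ σ : Equiv.Perm (Fin n), ∀ i j, j < i → ¬ r (σ i) (σ j) := by
  obtain ⟨f, hf⟩ := exists_rank_lt_of_rel_of_ne (r := r)
  refine ⟨Tuple.sort f, fun i j hji hr => ?_⟩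
  exact (hf _ _ hr ((Tuple.sort f).injective.ne hji.ne')).not_ge
    (Tuple.monotone_sort f hji.le)

theorem stmt17 (n : ℕ) (𝒮 : Set (Matrix (Fin n) (Fin n) ℝ))
    (hnn : ∀ M ∈ 𝒮, ∀ i j, 0 ≤ M i j)
    (hmul : ∀ S ∈ 𝒮, ∀ T ∈ 𝒮, S * T ∈ 𝒮)
    (htri : ∀ M ∈ 𝒮, ∃ σ : Equiv.Perm (Fin n),
      ∀ i j : Fin n, j < i → (M.submatrix σ σ) i j = 0)
    (hdiag : ∀ S ∈ 𝒮, ∀ T ∈ 𝒮, ∀ i : Fin n, (S * T) i i = (T * S) i i) :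
    ∃ σ : Equiv.Perm (Fin n), ∀ M ∈ 𝒮,
      ∀ i j : Fin n, j < i → (M.submatrix σ σ) i j = 0 := by
  let r : Fin n → Fin n → Prop := fun x y => ∃ M ∈ 𝒮, 0 < M x y
  have : IsTrans (Fin n) r := ⟨fun x y z ⟨S, hS, hSxy⟩ ⟨T, hT, hTyz⟩ =>
    ⟨S * T, hmul S hS T hT, mul_apply_pos (hnn S hS) (hnn T hT) hSxy hTyz⟩⟩
  have : Std.Antisymm r := ⟨fun x y ⟨A, hA, hAxy⟩ ⟨B, hB, hByx⟩ => by
    obtain ⟨σ, hσ⟩ := htri A hA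
    have hAtri : A.BlockTriangular σ.symm := fun a b hba => by
      simpa using hσ (σ.symm a) (σ.symm b) hba
    exact eq_of_pos_of_pos_of_blockTriangular (hnn A hA) (hnn B hB) (hdiag A hA B hB) hAtri
      σ.symm.injective hAxy hByx⟩
  obtain ⟨σ, hσ⟩ := Relation.exists_perm_forall_lt_not_rel (r := r)
  refine ⟨σ, fun M hM i j hji => ?_⟩
  exact (not_lt.1 fun hpos => hσ i j hji ⟨M, hM, hpos⟩).antisymm (hnn M hM _ _)
end

section
/- For n ≥ 3, let A_i = e_i e_{i+1}^T for i = 1,…,n−1 and A_n = e_n e_1^T be nonnegative n×n matrices, where e_1,…,e_n is the standard basis of ℝ^n. Then A_i A_j has zero diagonal for all i, j, each A_i is nilpotent (hence triangularizable by a permutation), but the family {A_1,…,A_n} is not simultaneously permutation-triangularizable; indeed S = A_1 + ⋯ + A_n satisfies S^n = I, so S is not nilpotent despite having zero diagonal. -/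
/-!
Each `A i` is the matrix unit `single i (i + 1) 1` (indices mod `n`); a single off-diagonal unit is
triangularized by at most one transposition. A permutation triangularizing all `A i` at once would
have to place every `i` strictly before `i + 1`, which fails at the index placed last. Finally
`∑ i, A i` is the permutation matrix of the `n`-cycle `finRotate n`, whose `n`-th power is `1`.
-/

open Equiv

namespace Matrix

variable {ι R : Type*} [DecidableEq ι]

theorem single_mul_single_apply_self_eq_zero [Fintype ι] [NonUnitalNonAssocSemiring R]
    {i j j' l : ι} (h : j = j' → l ≠ i) (a b : R) (k : ι) :
    (single i j a * single j' l b) k k = 0 := by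
  by_cases hj : j = j'
  · subst hj
    rw [single_mul_single_same]
    exact single_apply_of_ne _ _ _ _ _ fun hk => h rfl (hk.2.trans hk.1.symm)
  · rw [single_mul_single_of_ne (h := hj)]
    rfl

theorem single_sq_eq_zero [Fintype ι] [Semiring R] {i j : ι} (h : i ≠ j)
    (a : R) : single i j a ^ 2 = 0 := by
  rw [sq, single_mul_single_of_ne (h := h.symm)]

section LinearOrder

variable [LinearOrder ι] [Zero R] {σ : Perm ι} {i j : ι} {c : R}

theorem blockTriangular_submatrix_single (h : σ.symm i ≤ σ.symm j) (c : R) :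
    ((single i j c).submatrix σ σ).BlockTriangular id := by
  intro p q hqp
  refine single_apply_of_ne _ _ _ _ _ fun ⟨hp, hq⟩ => hqp.not_ge ?_
  rwa [hp, hq, symm_apply_apply, symm_apply_apply] at h

theorem BlockTriangular.symm_apply_le_of_submatrix_single
    (h : ((single i j c).submatrix σ σ).BlockTriangular id) (hc : c ≠ 0) :
    σ.symm i ≤ σ.symm j := by
  refine le_of_not_gt fun hji => hc ?_
  simpa using h hji

theorem exists_perm_blockTriangular_submatrix_single (i j : ι) (c : R) :
    ∃ σ : Perm ι, ((single i j c).submatrix σ σ).BlockTriangular id := by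
  rcases le_total i j with hij | hji
  · exact ⟨1, blockTriangular_submatrix_single hij c⟩
  · refine ⟨Equiv.swap i j, blockTriangular_submatrix_single ?_ c⟩
    rwa [symm_swap, swap_apply_left, swap_apply_right]

theorem not_exists_perm_forall_blockTriangular_submatrix_single [Finite ι] [Nonempty ι]
    {f : ι → ι} (hf : ∀ i, f i ≠ i) (hc : c ≠ 0) :
    ¬ ∃ σ : Perm ι, ∀ i, ((single i (f i) c).submatrix σ σ).BlockTriangular id := by
  rintro ⟨σ, hσ⟩
  obtain ⟨i, hi⟩ := Finite.exists_max σ.symm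
  have hle := (hσ i).symm_apply_le_of_submatrix_single hc
  exact hf i (σ.symm.injective (le_antisymm (hi (f i)) hle))

end LinearOrder

theorem sum_single_one_eq_permMatrix [Fintype ι] [AddCommMonoidWithOne R] (σ : Perm ι) :
    ∑ i, single i (σ i) (1 : R) = σ.permMatrix R := by
  ext p q
  simp [sum_apply, single_apply, ite_and, PEquiv.toMatrix_apply, eq_comm]

theorem permMatrix_pow [Fintype ι] [Semiring R] (σ : Perm ι) (k : ℕ) :
    (σ ^ k).permMatrix R = σ.permMatrix R ^ k := by
  induction k with
  | zero => simp
  | succ k ih => rw [pow_succ', permMatrix_mul, ih, pow_succ]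

end Matrix

theorem finRotate_pow_self {n : ℕ} (hn : 2 ≤ n) : finRotate n ^ n = 1 := by
  have h := pow_orderOf_eq_one (finRotate n)
  rwa [(isCycle_finRotate_of_le hn).orderOf, support_finRotate_of_le hn, Finset.card_univ,
    Fintype.card_fin] at h

theorem finRotate_finRotate_ne_self {n : ℕ} (hn : 3 ≤ n) (i : Fin n) :
    finRotate n (finRotate n i) ≠ i := by
  have : NeZero n := ⟨by omega⟩
  rw [finRotate_apply, finRotate_apply, add_assoc, Ne, add_eq_left, Fin.ext_iff, Fin.val_add,
    Fin.val_one', Fin.val_zero]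
  simp [Nat.mod_eq_of_lt (show 1 < n by omega), Nat.mod_eq_of_lt (show 2 < n by omega)]

theorem stmt18 (n : ℕ) (hn : 3 ≤ n)
    (A : Fin n → Matrix (Fin n) (Fin n) ℝ)
    (hA : ∀ i : Fin n,
      A i = Matrix.single i ⟨((i : ℕ) + 1) % n, Nat.mod_lt _ (by omega)⟩ (1 : ℝ)) :
    (∀ i j k : Fin n, (A i * A j) k k = 0) ∧
    (∀ i : Fin n, (A i) ^ 2 = 0) ∧
    (∀ i : Fin n, ∃ σ : Equiv.Perm (Fin n),
      ∀ p q : Fin n, q < p → ((A i).submatrix σ σ) p q = 0) ∧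
    (¬ ∃ σ : Equiv.Perm (Fin n), ∀ i : Fin n,
      ∀ p q : Fin n, q < p → ((A i).submatrix σ σ) p q = 0) ∧
    (∑ i : Fin n, A i) ^ n = 1 := by
  have : NeZero n := ⟨by omega⟩
  have hA' : ∀ i, A i = Matrix.single i (finRotate n i) 1 := fun i => by
    rw [hA, finRotate_apply]
    congr 1
    ext
    simp [Fin.val_add]
  have hne : ∀ i, finRotate n i ≠ i := fun i h =>
    finRotate_finRotate_ne_self hn i (by rw [h, h])
  simp only [hA']
  refine ⟨fun i j k => ?_, fun i => Matrix.single_sq_eq_zero (hne i).symm 1,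
    fun i => Matrix.exists_perm_blockTriangular_submatrix_single _ _ 1, fun ⟨σ, hσ⟩ => ?_, ?_⟩
  · refine Matrix.single_mul_single_apply_self_eq_zero ?_ 1 1 k
    rintro rfl
    exact finRotate_finRotate_ne_self hn i
  · exact Matrix.not_exists_perm_forall_blockTriangular_submatrix_single hne one_ne_zero
      ⟨σ, fun i p q => hσ i p q⟩
  · rw [Matrix.sum_single_one_eq_permMatrix, ← Matrix.permMatrix_pow (R := ℝ),
      finRotate_pow_self (by omega), Matrix.permMatrix_one]
end
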